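/- Let d ≥ 2 be an integer, let (Ω, 𝔽, μ) be a probability space, let V : Ω → ({0,1}^d → ℝ) be a family of coalitional games such that ω ↦ V(ω)(s) is measurable for each of the 2^d subsets s, and let Φ : Ω → ℝ^d be a measurable estimator satisfying the efficiency constraint 1^⊤Φ(ω) = V(ω)(1) − V(ω)(0) for μ-almost every ω. Define the expected losses L = E_ω[h_{V(ω)}(Φ(ω))] and L* = E_ω[h_{V(ω)}(φ(V(ω)))], assumed finite. Then E_ω[‖Φ(ω) − φ(V(ω))‖₂] ≤ √(2·H_{d−1}·(L − L*)). -/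

import Mathlib

open scoped BigOperators
open MeasureTheory

/-- The `n`-th harmonic number `H_n = ∑_{k=1}^n 1/k`. -/
noncomputable def harm (n : ℕ) : ℝ := ∑ k ∈ Finset.Icc 1 n, (1 : ℝ) / k

/-- Normalizing constant `Q = ∑_{k=1}^{d-1} (d-1)/(k(d-k))` of the Shapley kernel. -/
noncomputable def shapQ (d : ℕ) : ℝ :=
  ∑ k ∈ Finset.Icc 1 (d - 1), ((d : ℝ) - 1) / ((k : ℝ) * ((d : ℝ) - (k : ℝ)))

/-- Shapley kernel distribution on subsets `s ⊆ {1,…,d}`. -/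
noncomputable def pSh (d : ℕ) (s : Finset (Fin d)) : ℝ :=
  if 0 < s.card ∧ s.card < d then
    (((d : ℝ) - 1) /
      ((Nat.choose d s.card : ℝ) * (s.card : ℝ) * ((d : ℝ) - (s.card : ℝ)))) / shapQ d
  else 0

/-- Shapley regression loss `h_v(φ) = E_{s∼p_Sh}[(v(s) - v(0) - sᵀφ)²]`. -/
noncomputable def hLoss (d : ℕ) (v : Finset (Fin d) → ℝ)
    (φ : EuclideanSpace ℝ (Fin d)) : ℝ :=
  ∑ s : Finset (Fin d), pSh d s * (v s - v ∅ - ∑ i ∈ s, φ i) ^ 2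

/-- Shapley values `φ_i(v) = (1/d) ∑_{s : i ∉ s} C(d-1, |s|)⁻¹ (v(s+e_i) - v(s))`. -/
noncomputable def shapleyValue (d : ℕ) (v : Finset (Fin d) → ℝ) :
    EuclideanSpace ℝ (Fin d) :=
  WithLp.toLp 2 fun i => (1 / (d : ℝ)) *
    ∑ s ∈ Finset.univ.filter (fun s : Finset (Fin d) => i ∉ s),
      ((Nat.choose (d - 1) s.card : ℝ))⁻¹ * (v (insert i s) - v s)

/-!
For an efficient `φ` the regression loss satisfies `h_v(φ) - h_v(φ*) = ‖φ - φ*‖² / (2 H_{d-1})`,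
where `φ*` is the Shapley value. The loss is a quadratic in `φ`; under `p_Sh` one has
`P(i ∈ s) = 1/2` (the kernel is invariant under complementation) and
`P(i ∈ s, j ∉ s) = 1 / (2 H_{d-1})` for `i ≠ j`, so the second-moment matrix `E[s sᵀ]` acts as
`1 / (2 H_{d-1})` on the hyperplane `1ᵀδ = 0`. The cross term vanishes because
`E[s_i (v(s) - v(0) - sᵀφ*)]` does not depend on `i`: the kernel and the Shapley weights are
matched by `2 H_{d-1} p_Sh(s) = (C(d-1, |s|-1)⁻¹ + C(d-1, |s|)⁻¹) / d`.
Hence `E‖Φ - φ*‖² = 2 H_{d-1} (L - L*)` and the bound follows from `(E X)² ≤ E X²`.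
-/

open Finset

section LeastSquares

variable {ι : Type*} [Fintype ι] [DecidableEq ι]

theorem sum_mul_sum_mem_comm (f : Finset ι → ℝ) (δ : ι → ℝ) :
    ∑ s, f s * ∑ i ∈ s, δ i = ∑ i, δ i * ∑ s, (if i ∈ s then f s else 0) := by
  calc ∑ s, f s * ∑ i ∈ s, δ i = ∑ s, ∑ i, δ i * (if i ∈ s then f s else 0) := by
        refine sum_congr rfl fun s _ => ?_
        rw [mul_sum, ← Fintype.sum_ite_mem]
        exact sum_congr rfl fun i _ => by split_ifs <;> ring
    _ = _ := by rw [sum_comm]; simp_rw [mul_sum]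

theorem sum_ite_mem_mul_sum_mem (p : Finset ι → ℝ) {α γ : ℝ}
    (hα : ∀ i, ∑ s, (if i ∈ s then p s else 0) = α)
    (hγ : ∀ i j, i ≠ j → ∑ s, (if i ∈ s ∧ j ∉ s then p s else 0) = γ) (ψ : ι → ℝ) (i : ι) :
    ∑ s, (if i ∈ s then p s * ∑ j ∈ s, ψ j else 0) = α * ∑ j, ψ j - γ * (∑ j, ψ j - ψ i) := by
  have hsplit : ∀ s, (if i ∈ s then p s * ∑ j ∈ s, ψ j else 0) =
      (if i ∈ s then p s else 0) * ∑ j, ψ j - ∑ j, (if i ∈ s ∧ j ∉ s then p s else 0) * ψ j := by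
    intro s
    by_cases hi : i ∈ s
    · have hout : ∑ j, (if i ∈ s ∧ j ∉ s then p s else 0) * ψ j = p s * ∑ j ∈ sᶜ, ψ j := by
        rw [mul_sum, ← Fintype.sum_ite_mem sᶜ]
        exact sum_congr rfl fun j _ => by by_cases hj : j ∈ s <;> simp [hi, hj]
      rw [if_pos hi, if_pos hi, hout, ← sum_add_sum_compl s ψ]
      ring
    · simp [hi]
  have hpair : ∀ j, ∑ s, (if i ∈ s ∧ j ∉ s then p s else 0) = if j = i then 0 else γ := by
    intro j
    split_ifs with hj
    · simp [hj]
    · exact hγ i j (Ne.symm hj)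
  simp_rw [hsplit, sum_sub_distrib, ← sum_mul, hα]
  rw [sum_comm]
  simp_rw [← sum_mul, hpair, ite_mul, zero_mul, sum_ite, sum_const_zero, zero_add]
  rw [filter_ne', ← mul_sum, ← sum_erase_add _ _ (mem_univ i)]
  ring

/-- `hc` is the first-order condition for `ψ` to minimise the weighted loss on the hyperplane
`∑ i, φ i = ∑ i, ψ i`, and `hα`, `hγ` say that the second-moment matrix of `p` acts as `γ` on
the direction space of that hyperplane. -/
theorem sum_sq_residual_sub_eq (p : Finset ι → ℝ) {α γ c : ℝ}
    (hα : ∀ i, ∑ s, (if i ∈ s then p s else 0) = α)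
    (hγ : ∀ i j, i ≠ j → ∑ s, (if i ∈ s ∧ j ∉ s then p s else 0) = γ)
    (y : Finset ι → ℝ) {φ ψ : ι → ℝ}
    (hc : ∀ i, ∑ s, (if i ∈ s then p s * (y s - ∑ j ∈ s, ψ j) else 0) = c)
    (hφψ : ∑ i, φ i = ∑ i, ψ i) :
    ∑ s, p s * (y s - ∑ i ∈ s, φ i) ^ 2 - ∑ s, p s * (y s - ∑ i ∈ s, ψ i) ^ 2 =
      γ * ∑ i, (φ i - ψ i) ^ 2 := by
  set δ := fun i => φ i - ψ i
  have hδ : ∑ i, δ i = 0 := by simp [δ, sum_sub_distrib, hφψ]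
  have hpoint : ∀ s, p s * (y s - ∑ i ∈ s, φ i) ^ 2 - p s * (y s - ∑ i ∈ s, ψ i) ^ 2 =
      (p s * ∑ j ∈ s, δ j - 2 * (p s * (y s - ∑ j ∈ s, ψ j))) * ∑ i ∈ s, δ i := by
    intro s
    simp only [δ, sum_sub_distrib]
    ring
  have hmoment : ∀ i, ∑ s, (if i ∈ s then
      p s * ∑ j ∈ s, δ j - 2 * (p s * (y s - ∑ j ∈ s, ψ j)) else 0) = γ * δ i - 2 * c := by
    intro i
    have hite : ∀ s, (if i ∈ s then p s * ∑ j ∈ s, δ j - 2 * (p s * (y s - ∑ j ∈ s, ψ j))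
        else 0) = (if i ∈ s then p s * ∑ j ∈ s, δ j else 0) -
          2 * (if i ∈ s then p s * (y s - ∑ j ∈ s, ψ j) else 0) := fun s => by
      split_ifs <;> ring
    rw [sum_congr rfl fun s _ => hite s, sum_sub_distrib, ← mul_sum, hc,
      sum_ite_mem_mul_sum_mem p hα hγ, hδ]
    ring
  rw [← sum_sub_distrib, sum_congr rfl fun s _ => hpoint s, sum_mul_sum_mem_comm,
    sum_congr rfl fun i _ => by rw [hmoment i]]
  calc ∑ i, δ i * (γ * δ i - 2 * c) = γ * ∑ i, δ i ^ 2 - 2 * c * ∑ i, δ i := by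
        rw [mul_sum, mul_sum, ← sum_sub_distrib]
        exact sum_congr rfl fun i _ => by ring
    _ = γ * ∑ i, δ i ^ 2 := by rw [hδ, mul_zero, sub_zero]

end LeastSquares

section SubsetSums

variable {ι M : Type*} [DecidableEq ι] [AddCommMonoid M]

theorem sum_powerset_ite_mem {u : Finset ι} {i : ι} (hi : i ∈ u) (g : Finset ι → M) :
    ∑ s ∈ u.powerset, (if i ∈ s then g s else 0) =
      ∑ t ∈ (u.erase i).powerset, g (insert i t) := by
  conv_lhs => rw [← insert_erase hi]
  rw [sum_powerset_insert (notMem_erase i u), sum_eq_zero fun t ht =>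
    if_neg fun hit => notMem_erase i u (mem_powerset.1 ht hit), zero_add]
  exact sum_congr rfl fun t _ => if_pos (mem_insert_self i t)

theorem sum_powerset_ite_notMem {u : Finset ι} {j : ι} (hj : j ∈ u) (g : Finset ι → M) :
    ∑ s ∈ u.powerset, (if j ∉ s then g s else 0) = ∑ t ∈ (u.erase j).powerset, g t := by
  have hout : ∑ t ∈ (u.erase j).powerset, (if j ∉ insert j t then g (insert j t) else 0) = 0 :=
    sum_eq_zero fun t _ => if_neg (not_not.2 (mem_insert_self j t))
  conv_lhs => rw [← insert_erase hj]
  rw [sum_powerset_insert (notMem_erase j u), hout, add_zero]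
  exact sum_congr rfl fun t ht => if_pos fun hjt => notMem_erase j u (mem_powerset.1 ht hjt)

theorem sum_ite_mem_and_notMem_card [Fintype ι] {i j : ι} (hij : i ≠ j) (f : ℕ → M) :
    ∑ s : Finset ι, (if i ∈ s ∧ j ∉ s then f #s else 0) =
      ∑ m ∈ range (Fintype.card ι - 1), (Fintype.card ι - 2).choose m • f (m + 1) := by
  have hj : j ∈ univ.erase i := mem_erase.2 ⟨hij.symm, mem_univ j⟩
  have hcard : #((univ.erase i).erase j) = Fintype.card ι - 2 := by
    rw [card_erase_of_mem hj, card_erase_of_mem (mem_univ i), card_univ, Nat.sub_sub]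
  have hshift : Fintype.card ι - 2 + 1 = Fintype.card ι - 1 := by
    have : 1 < Fintype.card ι := by simpa using one_lt_card.2 ⟨i, mem_univ i, j, mem_univ j, hij⟩
    omega
  have hcard_insert : ∀ r ∈ ((univ.erase i).erase j).powerset, #(insert i r) = #r + 1 :=
    fun r hr => card_insert_of_notMem fun hir =>
      notMem_erase i univ (erase_subset j _ (mem_powerset.1 hr hir))
  simp_rw [ite_and, ← powerset_univ]
  rw [sum_powerset_ite_mem (mem_univ i)]
  simp_rw [mem_insert, hij.symm, false_or]
  rw [sum_powerset_ite_notMem hj, sum_congr rfl fun r hr => by rw [hcard_insert r hr],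
    sum_powerset_apply_card (fun m => f (m + 1)), hcard, hshift]

end SubsetSums

theorem two_mul_sum_ite_mem_of_compl {ι : Type*} [Fintype ι] [DecidableEq ι]
    (p : Finset ι → ℝ) (hp : ∀ s, p sᶜ = p s) (i : ι) :
    2 * ∑ s, (if i ∈ s then p s else 0) = ∑ s, p s := by
  have hswap : ∑ s, (if i ∈ s then p s else 0) = ∑ s, (if i ∉ s then p s else 0) :=
    Fintype.sum_bijective (·ᶜ) compl_involutive.bijective _ _ fun s => by simp [hp]
  rw [two_mul]
  nth_rw 2 [hswap]
  rw [← sum_add_distrib]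
  exact sum_congr rfl fun s _ => by split_ifs <;> simp_all

theorem harm_pos {n : ℕ} (hn : 1 ≤ n) : 0 < harm n :=
  sum_pos (fun k hk => by have := (mem_Icc.1 hk).1; positivity) ⟨1, mem_Icc.2 ⟨le_rfl, hn⟩⟩

theorem sum_Icc_one_div_sub (d : ℕ) :
    ∑ k ∈ Icc 1 (d - 1), 1 / ((d : ℝ) - k) = harm (d - 1) := by
  refine sum_nbij' (d - ·) (d - ·) ?_ ?_ ?_ ?_ fun k hk => ?_
  iterate 4 (intro k hk; simp only [mem_Icc] at hk ⊢; omega)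
  rw [Nat.cast_sub ((mem_Icc.1 hk).2.trans (Nat.sub_le d 1))]

theorem shapQ_eq (d : ℕ) : shapQ d = 2 * ((d : ℝ) - 1) * harm (d - 1) / d := by
  have hterm : ∀ k ∈ Icc 1 (d - 1), ((d : ℝ) - 1) / ((k : ℝ) * ((d : ℝ) - k)) =
      ((d : ℝ) - 1) / d * (1 / k + 1 / ((d : ℝ) - k)) := by
    intro k hk
    obtain ⟨hk1, hkd⟩ := mem_Icc.1 hk
    have hk0 : (k : ℝ) ≠ 0 := by positivity
    have hdk : (d : ℝ) - k ≠ 0 := sub_ne_zero.2 (by norm_cast; omega)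
    have hd : (d : ℝ) ≠ 0 := by norm_cast; omega
    field_simp
    ring
  rw [shapQ, sum_congr rfl hterm, ← mul_sum, sum_add_distrib, sum_Icc_one_div_sub, harm]
  ring

theorem shapQ_pos {d : ℕ} (hd : 2 ≤ d) : 0 < shapQ d := by
  have hd1 : (1 : ℝ) < d := by exact_mod_cast hd
  have := harm_pos (n := d - 1) (by omega)
  rw [shapQ_eq]
  have : (0 : ℝ) < d - 1 := by linarith
  positivity

noncomputable def shapleyKernel (d k : ℕ) : ℝ :=
  if 0 < k ∧ k < d then
    (((d : ℝ) - 1) / ((d.choose k : ℝ) * (k : ℝ) * ((d : ℝ) - (k : ℝ)))) / shapQ d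
  else 0

theorem pSh_eq_shapleyKernel {d : ℕ} (s : Finset (Fin d)) : pSh d s = shapleyKernel d #s := rfl

theorem shapleyKernel_sub {d k : ℕ} (hk : k ≤ d) : shapleyKernel d (d - k) = shapleyKernel d k := by
  unfold shapleyKernel
  by_cases h : 0 < k ∧ k < d
  · rw [if_pos h, if_pos (by omega), Nat.choose_symm hk, Nat.cast_sub hk]
    ring_nf
  · rw [if_neg h, if_neg (by omega)]

theorem pSh_compl {d : ℕ} (s : Finset (Fin d)) : pSh d sᶜ = pSh d s := by
  rw [pSh_eq_shapleyKernel, card_compl, Fintype.card_fin,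
    shapleyKernel_sub ((card_le_univ s).trans_eq (Fintype.card_fin d)), pSh_eq_shapleyKernel]

theorem sum_pSh {d : ℕ} (hd : 2 ≤ d) : ∑ s, pSh d s = 1 := by
  have hsub : Icc 1 (d - 1) ⊆ range (d + 1) := fun k hk => by
    simp only [mem_Icc, mem_range] at hk ⊢; omega
  have hterm : ∀ k ∈ Icc 1 (d - 1), d.choose k • shapleyKernel d k =
      ((d : ℝ) - 1) / ((k : ℝ) * ((d : ℝ) - k)) / shapQ d := by
    intro k hk
    obtain ⟨hk1, hkd⟩ := mem_Icc.1 hk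
    have hc : (d.choose k : ℝ) ≠ 0 := by exact_mod_cast (Nat.choose_pos (by omega)).ne'
    rw [shapleyKernel, if_pos ⟨by omega, by omega⟩, nsmul_eq_mul]
    field_simp
  simp_rw [← powerset_univ, pSh_eq_shapleyKernel]
  rw [sum_powerset_apply_card, card_univ, Fintype.card_fin, ← sum_subset hsub fun k _ hk => ?_,
    sum_congr rfl hterm, ← sum_div, ← shapQ, div_self (shapQ_pos hd).ne']
  rw [shapleyKernel, if_neg fun h => hk (mem_Icc.2 ⟨h.1, by omega⟩), smul_zero]

theorem sum_pSh_mem {d : ℕ} (hd : 2 ≤ d) (i : Fin d) :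
    ∑ s, (if i ∈ s then pSh d s else 0) = 1 / 2 := by
  have := two_mul_sum_ite_mem_of_compl (pSh d) pSh_compl i
  rw [sum_pSh hd] at this
  linarith

theorem natCast_mul_choose_pred_pred {d k : ℕ} (hd : 0 < d) (hk : 0 < k) :
    (d : ℝ) * (d - 1).choose (k - 1) = d.choose k * k := by
  obtain ⟨n, rfl⟩ : ∃ n, d = n + 1 := ⟨d - 1, by omega⟩
  obtain ⟨m, rfl⟩ : ∃ m, k = m + 1 := ⟨k - 1, by omega⟩
  exact_mod_cast Nat.add_one_mul_choose_eq n m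

theorem natCast_mul_choose_pred {d k : ℕ} (hkd : k ≤ d) :
    (d : ℝ) * (d - 1).choose k = d.choose k * ((d : ℝ) - k) := by
  rcases Nat.eq_zero_or_pos d with rfl | hd
  · obtain rfl : k = 0 := by omega
    simp
  obtain ⟨n, rfl⟩ : ∃ n, d = n + 1 := ⟨d - 1, by omega⟩
  have h := Nat.choose_mul_succ_eq n k
  rw [← Nat.cast_inj (R := ℝ), Nat.cast_mul, Nat.cast_mul, Nat.cast_sub hkd] at h
  simpa [mul_comm] using h

theorem two_mul_harm_mul_shapleyKernel {d k : ℕ} (hd : 2 ≤ d) (hk : 0 < k) (hkd : k < d) :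
    2 * harm (d - 1) * shapleyKernel d k = d / (d.choose k * k * ((d : ℝ) - k)) := by
  have hH := (harm_pos (n := d - 1) (by omega)).ne'
  have hd1 : (d : ℝ) - 1 ≠ 0 := sub_ne_zero.2 (by norm_cast; omega)
  have hd0 : (d : ℝ) ≠ 0 := by positivity
  rw [shapleyKernel, if_pos ⟨hk, hkd⟩, shapQ_eq]
  field_simp

theorem sum_pSh_mem_notMem {d : ℕ} (hd : 2 ≤ d) {i j : Fin d} (hij : i ≠ j) :
    ∑ s, (if i ∈ s ∧ j ∉ s then pSh d s else 0) = 1 / (2 * harm (d - 1)) := by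
  have hH := (harm_pos (n := d - 1) (by omega)).ne'
  have hpred : ((d - 1 : ℕ) : ℝ) = d - 1 := by rw [Nat.cast_sub (by omega), Nat.cast_one]
  have hterm : ∀ m ∈ range (d - 1), (d - 2).choose m • shapleyKernel d (m + 1) =
      1 / (2 * harm (d - 1) * ((d : ℝ) - 1)) := by
    intro m hm
    have hm := mem_range.1 hm
    have e1 := natCast_mul_choose_pred_pred (d := d) (k := m + 1) (by omega) (by omega)
    have e2 := natCast_mul_choose_pred (d := d - 1) (k := m) (by omega)
    rw [Nat.add_sub_cancel] at e1
    rw [show d - 1 - 1 = d - 2 by omega, hpred] at e2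
    have hc : ((d - 2).choose m : ℝ) ≠ 0 := by exact_mod_cast (Nat.choose_pos (by omega)).ne'
    have hk : shapleyKernel d (m + 1) =
        d / (d.choose (m + 1) * (m + 1 : ℕ) * ((d : ℝ) - (m + 1 : ℕ))) / (2 * harm (d - 1)) := by
      rw [← two_mul_harm_mul_shapleyKernel hd (by omega) (by omega)]
      field_simp
    rw [nsmul_eq_mul, hk, ← e1, Nat.cast_add_one, show (d : ℝ) - (m + 1) = (d - 1) - m by ring,
      mul_assoc, ← e2]
    have hd0 : (d : ℝ) ≠ 0 := by positivity
    have hd1 : (d : ℝ) - 1 ≠ 0 := sub_ne_zero.2 (by norm_cast; omega)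
    field_simp
  simp_rw [pSh_eq_shapleyKernel]
  rw [sum_ite_mem_and_notMem_card hij, Fintype.card_fin, sum_congr rfl hterm, sum_const,
    card_range, nsmul_eq_mul, hpred]
  have hd1 : (d : ℝ) - 1 ≠ 0 := sub_ne_zero.2 (by norm_cast; omega)
  field_simp

noncomputable def shapleyWeight (d k : ℕ) : ℝ := 1 / (d : ℝ) * ((d - 1).choose k : ℝ)⁻¹

theorem shapleyValue_eq_sub {d : ℕ} (v : Finset (Fin d) → ℝ) (i : Fin d) :
    shapleyValue d v i = ∑ s, (if i ∈ s then shapleyWeight d (#s - 1) * v s else 0) -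
      ∑ s, (if i ∉ s then shapleyWeight d #s * v s else 0) := by
  have hmem : ∑ s, (if i ∈ s then shapleyWeight d (#s - 1) * v s else 0) =
      ∑ t ∈ (univ.erase i).powerset, shapleyWeight d #t * v (insert i t) := by
    rw [← powerset_univ, sum_powerset_ite_mem (mem_univ i)]
    refine sum_congr rfl fun t ht => ?_
    rw [card_insert_of_notMem fun h => notMem_erase i univ (mem_powerset.1 ht h),
      Nat.add_sub_cancel]
  have hnotMem : ∀ g : Finset (Fin d) → ℝ,
      ∑ s with i ∉ s, g s = ∑ t ∈ (univ.erase i).powerset, g t := fun g => by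
    rw [sum_filter, ← powerset_univ, sum_powerset_ite_notMem (mem_univ i)]
  show 1 / (d : ℝ) * _ = _
  rw [mul_sum, hmem, ← sum_filter, hnotMem, hnotMem, ← sum_sub_distrib]
  exact sum_congr rfl fun t _ => by rw [shapleyWeight]; ring

theorem card_mul_shapleyWeight_pred_sub {d : ℕ} (hd : 0 < d) (s : Finset (Fin d)) :
    (#s : ℝ) * shapleyWeight d (#s - 1) - ((d : ℝ) - #s) * shapleyWeight d #s =
      (if s = univ then 1 else 0) - (if s = ∅ then 1 else 0) := by
  have hd0 : (d : ℝ) ≠ 0 := by positivity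
  have huniv : (univ : Finset (Fin d)) ≠ ∅ := univ_nonempty_iff.2 ⟨⟨0, hd⟩⟩ |>.ne_empty
  by_cases hs : s = univ
  · subst hs
    simp [huniv, shapleyWeight, hd0]
  by_cases hs' : s = ∅
  · subst hs'
    simp [Ne.symm huniv, shapleyWeight, hd0]
  have hk : 0 < #s := card_pos.2 (nonempty_iff_ne_empty.2 hs')
  have hkd : #s < d := by simpa using card_lt_card (ssubset_univ_iff.2 hs)
  have e1 := natCast_mul_choose_pred_pred hd hk
  have e2 := natCast_mul_choose_pred hkd.le
  have hc : (d.choose #s : ℝ) ≠ 0 := by exact_mod_cast (Nat.choose_pos hkd.le).ne'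
  have hk0 : (#s : ℝ) ≠ 0 := by positivity
  have hdk : (d : ℝ) - #s ≠ 0 := sub_ne_zero.2 (by norm_cast; omega)
  rw [if_neg hs, if_neg hs', shapleyWeight, shapleyWeight, one_div, ← mul_inv, ← mul_inv, e1, e2]
  field_simp
  ring

theorem sum_shapleyValue {d : ℕ} (hd : 0 < d) (v : Finset (Fin d) → ℝ) :
    ∑ i, shapleyValue d v i = v univ - v ∅ := by
  have hcount : ∀ s : Finset (Fin d), ∀ x : ℝ,
      ∑ i, (if i ∉ s then x else 0) = ((d : ℝ) - #s) * x := fun s x => by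
    simp_rw [← mem_compl, Fintype.sum_ite_mem, sum_const, card_compl, Fintype.card_fin,
      nsmul_eq_mul, Nat.cast_sub (card_le_univ s |>.trans_eq (Fintype.card_fin d))]
  simp_rw [shapleyValue_eq_sub, sum_sub_distrib]
  rw [sum_comm, sum_comm (γ := Fin d)]
  simp_rw [Fintype.sum_ite_mem, sum_const, nsmul_eq_mul, hcount, ← sum_sub_distrib, ← mul_assoc,
    ← sub_mul, card_mul_shapleyWeight_pred_sub hd, sub_mul, ite_mul, one_mul, zero_mul,
    sum_sub_distrib, sum_ite_eq', mem_univ, if_true]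

theorem shapleyWeight_card_pred_add {d : ℕ} (hd : 2 ≤ d) {s : Finset (Fin d)} (hs : s.Nonempty) :
    shapleyWeight d (#s - 1) + shapleyWeight d #s =
      2 * harm (d - 1) * pSh d s + if s = univ then 1 / (d : ℝ) else 0 := by
  have hd0 : (d : ℝ) ≠ 0 := by positivity
  by_cases hsu : s = univ
  · subst hsu
    -- `shapleyWeight d d = 0` since `(d - 1).choose d = 0` and `0⁻¹ = 0` in `ℝ`.
    simp [pSh, shapleyWeight, Nat.choose_eq_zero_of_lt (by omega : d - 1 < d)]
  have hk : 0 < #s := card_pos.2 hs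
  have hkd : #s < d := by simpa using card_lt_card (ssubset_univ_iff.2 hsu)
  have e1 := natCast_mul_choose_pred_pred (d := d) (by omega) hk
  have e2 := natCast_mul_choose_pred hkd.le
  have hc : (d.choose #s : ℝ) ≠ 0 := by exact_mod_cast (Nat.choose_pos hkd.le).ne'
  have hk0 : (#s : ℝ) ≠ 0 := by positivity
  have hdk : (d : ℝ) - #s ≠ 0 := sub_ne_zero.2 (by norm_cast; omega)
  rw [if_neg hsu, add_zero, pSh_eq_shapleyKernel, two_mul_harm_mul_shapleyKernel hd hk hkd,
    shapleyWeight, shapleyWeight, one_div, ← mul_inv, ← mul_inv, e1, e2]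
  field_simp
  ring

theorem two_mul_harm_mul_sum_pSh_mem {d : ℕ} (hd : 2 ≤ d) (v : Finset (Fin d) → ℝ) (i : Fin d) :
    2 * harm (d - 1) * ∑ s, (if i ∈ s then pSh d s * v s else 0) =
      shapleyValue d v i + ∑ s, shapleyWeight d #s * v s - v univ / d := by
  have hsplit : ∑ s, shapleyWeight d #s * v s = ∑ s, (if i ∈ s then shapleyWeight d #s * v s
      else 0) + ∑ s, (if i ∉ s then shapleyWeight d #s * v s else 0) := by
    rw [← sum_add_distrib]
    exact sum_congr rfl fun s _ => by split_ifs <;> simp_all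
  have hpoint : ∀ s, (if i ∈ s then shapleyWeight d (#s - 1) * v s else 0) +
      (if i ∈ s then shapleyWeight d #s * v s else 0) =
      2 * harm (d - 1) * (if i ∈ s then pSh d s * v s else 0) +
        if s = univ then v s / d else 0 := by
    intro s
    by_cases hi : i ∈ s
    · rw [if_pos hi, if_pos hi, if_pos hi, ← add_mul, shapleyWeight_card_pred_add hd ⟨i, hi⟩]
      split_ifs <;> ring
    · have hsu : s ≠ univ := fun h => hi (h ▸ mem_univ i)
      simp [hi, hsu]
  have htotal := sum_congr rfl fun s (_ : s ∈ univ) => hpoint s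
  rw [sum_add_distrib, sum_add_distrib, ← mul_sum, sum_ite_eq', if_pos (mem_univ _)] at htotal
  rw [shapleyValue_eq_sub, hsplit]
  linarith

theorem exists_sum_pSh_mem_mul_shapley_residual_eq {d : ℕ} (hd : 2 ≤ d)
    (v : Finset (Fin d) → ℝ) : ∃ c, ∀ i, ∑ s, (if i ∈ s then
      pSh d s * (v s - v ∅ - ∑ j ∈ s, shapleyValue d v j) else 0) = c := by
  set ψ := shapleyValue d v
  have hH : harm (d - 1) ≠ 0 := (harm_pos (by omega)).ne'
  set G := ∑ s, shapleyWeight d #s * v s - v univ / d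
  refine ⟨G / (2 * harm (d - 1)) - v ∅ / 2 - (∑ j, ψ j) / 2 + (∑ j, ψ j) / (2 * harm (d - 1)),
    fun i => ?_⟩
  have hsplit : ∑ s, (if i ∈ s then pSh d s * (v s - v ∅ - ∑ j ∈ s, ψ j) else 0) =
      ∑ s, (if i ∈ s then pSh d s * v s else 0) - v ∅ * ∑ s, (if i ∈ s then pSh d s else 0) -
        ∑ s, (if i ∈ s then pSh d s * ∑ j ∈ s, ψ j else 0) := by
    rw [mul_sum, ← sum_sub_distrib, ← sum_sub_distrib]
    exact sum_congr rfl fun s _ => by split_ifs <;> ring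
  have hv : ∑ s, (if i ∈ s then pSh d s * v s else 0) = (ψ i + G) / (2 * harm (d - 1)) := by
    rw [eq_div_iff (by positivity), mul_comm, two_mul_harm_mul_sum_pSh_mem hd v i]
    ring
  rw [hsplit, hv, sum_pSh_mem hd i,
    sum_ite_mem_mul_sum_mem (pSh d) (sum_pSh_mem hd) (fun _ _ => sum_pSh_mem_notMem hd)]
  field_simp
  ring

theorem hLoss_sub_hLoss_shapleyValue {d : ℕ} (hd : 2 ≤ d) (v : Finset (Fin d) → ℝ)
    {φ : EuclideanSpace ℝ (Fin d)} (hφ : ∑ i, φ i = v univ - v ∅) :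
    hLoss d v φ - hLoss d v (shapleyValue d v) =
      ‖φ - shapleyValue d v‖ ^ 2 / (2 * harm (d - 1)) := by
  obtain ⟨c, hc⟩ := exists_sum_pSh_mem_mul_shapley_residual_eq hd v
  rw [EuclideanSpace.real_norm_sq_eq, div_eq_inv_mul, ← one_div]
  exact sum_sq_residual_sub_eq (pSh d) (sum_pSh_mem hd) (fun _ _ => sum_pSh_mem_notMem hd)
    (fun s => v s - v ∅) hc (by rw [hφ, sum_shapleyValue (by omega)])

open ProbabilityTheory in
theorem integral_le_sqrt_integral_of_sq_ae_eq {Ω : Type*} [MeasurableSpace Ω] {μ : Measure Ω}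
    [IsProbabilityMeasure μ] {f g : Ω → ℝ} (hf : 0 ≤ᵐ[μ] f) (hg : Integrable g μ)
    (hfg : ∀ᵐ ω ∂μ, f ω ^ 2 = g ω) : ∫ ω, f ω ∂μ ≤ √(∫ ω, g ω ∂μ) := by
  have hf_sqrt : f =ᵐ[μ] fun ω => √(g ω) := by
    filter_upwards [hf, hfg] with ω h0 h2
    rw [← h2, Real.sqrt_sq h0]
  have hmeas : AEStronglyMeasurable f μ :=
    (Real.continuous_sqrt.comp_aestronglyMeasurable hg.aestronglyMeasurable).congr hf_sqrt.symm
  have hLp : MemLp f 2 μ :=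
    (memLp_two_iff_integrable_sq hmeas).2 (hg.congr (hfg.mono fun _ h => h.symm))
  have hsq : (∫ ω, f ω ∂μ) ^ 2 ≤ ∫ ω, g ω ∂μ := by
    have := variance_nonneg f μ
    rw [variance_eq_sub hLp, Pi.pow_def, integral_congr_ae hfg] at this
    linarith
  exact (le_abs_self _).trans (Real.abs_le_sqrt hsq)

theorem expected_shapley_estimation_bound_general (d : ℕ) (hd : 2 ≤ d)
    {Ω : Type*} [MeasurableSpace Ω] (μ : Measure Ω) [IsProbabilityMeasure μ]
    (V : Ω → Finset (Fin d) → ℝ)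
    (Φ : Ω → EuclideanSpace ℝ (Fin d))
    (heff : ∀ᵐ ω ∂μ, ∑ i, Φ ω i = V ω Finset.univ - V ω ∅)
    (hL : Integrable (fun ω => hLoss d (V ω) (Φ ω)) μ)
    (hLstar : Integrable (fun ω => hLoss d (V ω) (shapleyValue d (V ω))) μ) :
    ∫ ω, ‖Φ ω - shapleyValue d (V ω)‖ ∂μ ≤
      Real.sqrt (2 * harm (d - 1) *
        ((∫ ω, hLoss d (V ω) (Φ ω) ∂μ) -
          ∫ ω, hLoss d (V ω) (shapleyValue d (V ω)) ∂μ)) := by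
  have hH : 0 < harm (d - 1) := harm_pos (by omega)
  have hsq : ∀ᵐ ω ∂μ, ‖Φ ω - shapleyValue d (V ω)‖ ^ 2 =
      2 * harm (d - 1) * (hLoss d (V ω) (Φ ω) - hLoss d (V ω) (shapleyValue d (V ω))) :=
    heff.mono fun ω hω => by
      rw [hLoss_sub_hLoss_shapleyValue hd (V ω) hω]
      field_simp
  rw [← integral_sub hL hLstar, ← integral_const_mul]
  exact integral_le_sqrt_integral_of_sq_ae_eq (ae_of_all _ fun _ => norm_nonneg _)
    ((hL.sub hLstar).const_mul _) hsq

/-- For a family of games `V(ω)` and a measurable estimator `Φ(ω)` satisfying the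
efficiency constraint almost everywhere, the expected estimation error satisfies
`E[‖Φ - φ(V)‖₂] ≤ √(2 H_{d-1} (L - L*))`. -/
theorem expected_shapley_estimation_bound (d : ℕ) (hd : 2 ≤ d)
    {Ω : Type*} [MeasurableSpace Ω] (μ : Measure Ω) [IsProbabilityMeasure μ]
    (V : Ω → Finset (Fin d) → ℝ) (hV : ∀ s, Measurable fun ω => V ω s)
    (Φ : Ω → EuclideanSpace ℝ (Fin d)) (hΦ : Measurable Φ)
    (heff : ∀ᵐ ω ∂μ, ∑ i, Φ ω i = V ω Finset.univ - V ω ∅)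
    (hL : Integrable (fun ω => hLoss d (V ω) (Φ ω)) μ)
    (hLstar : Integrable (fun ω => hLoss d (V ω) (shapleyValue d (V ω))) μ) :
    ∫ ω, ‖Φ ω - shapleyValue d (V ω)‖ ∂μ ≤
      Real.sqrt (2 * harm (d - 1) *
        ((∫ ω, hLoss d (V ω) (Φ ω) ∂μ) -
          ∫ ω, hLoss d (V ω) (shapleyValue d (V ω)) ∂μ)) :=
  expected_shapley_estimation_bound_general d hd μ V Φ heff hL hLstar
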